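/- arXiv:1807.00512 — 5 statements merged into one kernel-verified Lean document; each statement's English description precedes it below -/
import Mathlib

section
/- If A is an n×n real matrix with A_{i,i} = 0 for all i, the identity being an optimal permutation is equivalent to the condition that every cycle in the weighted digraph of A has nonpositive weight. -/
/-!
Both conditions say that certain permutations have nonpositive weight `∑ i, A i (π i)`, and
the zero diagonal makes this weight additive over disjoint cycles, since fixed points contribute
nothing. The weight of a cycle `i₁ → ⋯ → i_m → i₁` is that of the cyclic permutation it traces, so
optimality of the identity bounds every cycle; conversely, every permutation is a product of
disjoint cycles, each of nonpositive weight.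
-/

open Finset

theorem List.formPerm_ofFn_apply {α : Type*} [DecidableEq α] {m : ℕ} {f : Fin (m + 1) → α}
    (hf : Function.Injective f) (k : Fin (m + 1)) :
    (List.ofFn f).formPerm (f k) = f (k + 1) := by
  have hk : (k : ℕ) < (List.ofFn f).length := by rw [List.length_ofFn]; exact k.is_lt
  have := List.formPerm_apply_getElem _ (List.nodup_ofFn.2 hf) k hk
  simp only [List.getElem_ofFn, List.length_ofFn] at this
  rw [this]
  congr 1
  ext
  simp [Fin.val_add]

namespace Equiv.Perm

variable {α M : Type*}

theorem IsCycle.exists_formPerm_ofFn [Fintype α] [DecidableEq α] {c : Perm α} (hc : c.IsCycle) :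
    ∃ (m : ℕ) (f : Fin (m + 1) → α), Function.Injective f ∧ (List.ofFn f).formPerm = c := by
  have ⟨x, hx, _⟩ := hc
  set l := c.toList x
  obtain ⟨m, hm⟩ : ∃ m, l.length = m + 1 :=
    Nat.exists_eq_add_one.2 (length_toList_pos_of_mem_support c x (mem_support.2 hx))
  refine ⟨m, fun k => l[k.cast hm.symm], fun a b hab => ?_, ?_⟩
  · simpa [Fin.ext_iff] using (nodup_toList c x).getElem_inj_iff.1 hab
  · rw [show List.ofFn (fun k : Fin (m + 1) => l[k.cast hm.symm]) = l from
      List.ext_getElem (by simp [hm]) fun _ _ _ => by simp only [List.getElem_ofFn]; rfl,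
      formPerm_toList, hc.cycleOf_eq hx]

section Weight

variable [Fintype α]

def weight [AddCommMonoid M] (w : α → α → M) (π : Perm α) : M := ∑ i, w i (π i)

section AddCommMonoid

variable [AddCommMonoid M] {w : α → α → M}

theorem weight_one (hw : ∀ i, w i i = 0) : weight w 1 = 0 := by
  simp [weight, hw]

theorem weight_mul_of_disjoint (hw : ∀ i, w i i = 0) {σ τ : Perm α} (hστ : Disjoint σ τ) :
    weight w (σ * τ) = weight w σ + weight w τ := by
  rw [weight, weight, weight, ← sum_add_distrib]
  refine sum_congr rfl fun i _ => ?_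
  rcases hστ i with h | h
  · rw [hστ.commute.eq, mul_apply, h, hw, zero_add]
  · rw [mul_apply, h, hw, add_zero]

theorem weight_formPerm_ofFn [DecidableEq α] (hw : ∀ i, w i i = 0) {m : ℕ}
    {f : Fin (m + 1) → α} (hf : Function.Injective f) :
    weight w (List.ofFn f).formPerm = ∑ k, w (f k) (f (k + 1)) := by
  have hsupp : ∀ i ∉ univ.image f, w i ((List.ofFn f).formPerm i) = 0 := fun i hi => by
    refine (congrArg (w i) (List.formPerm_apply_of_notMem fun hmem => hi ?_)).trans (hw i)
    obtain ⟨k, rfl⟩ := (List.mem_ofFn' f i).1 hmem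
    exact mem_image_of_mem f (mem_univ k)
  rw [weight, ← sum_subset (subset_univ _) fun i _ => hsupp i, sum_image fun a _ b _ h => hf h]
  exact sum_congr rfl fun k _ => by rw [List.formPerm_ofFn_apply hf]

end AddCommMonoid

theorem weight_nonpos_of_cycles_nonpos [AddCommMonoid M] [PartialOrder M] [IsOrderedAddMonoid M]
    {w : α → α → M} (hw : ∀ i, w i i = 0)
    (hcyc : ∀ (m : ℕ) (f : Fin (m + 1) → α), Function.Injective f →
      ∑ k : Fin (m + 1), w (f k) (f (k + 1)) ≤ 0) (π : Perm α) : weight w π ≤ 0 := by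
  classical
  induction π using cycle_induction_on with
  | base_one => exact (weight_one hw).le
  | base_cycles c hc =>
    obtain ⟨m, f, hf, rfl⟩ := hc.exists_formPerm_ofFn
    exact (weight_formPerm_ofFn hw hf).trans_le (hcyc m f hf)
  | induction_disjoint σ τ hστ _ hσ hτ =>
    exact (weight_mul_of_disjoint hw hστ).trans_le (add_nonpos hσ hτ)

end Weight

end Equiv.Perm

/-- For a matrix with zero diagonal, the identity is an optimal permutation iff
every cycle in the weighted digraph of `A` has nonpositive weight. -/
theorem id_optimal_iff_cycles_nonpos {n : ℕ} (A : Matrix (Fin n) (Fin n) ℝ)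
    (hdiag : ∀ i, A i i = 0) :
    (∀ π : Equiv.Perm (Fin n), ∑ i, A i (π i) ≤ 0) ↔
    (∀ (m : ℕ) (f : Fin (m + 1) → Fin n), Function.Injective f →
      ∑ k : Fin (m + 1), A (f k) (f (k + 1)) ≤ 0) := by
  refine ⟨fun hopt m f hf => ?_, fun hcyc => Equiv.Perm.weight_nonpos_of_cycles_nonpos hdiag hcyc⟩
  rw [← Equiv.Perm.weight_formPerm_ofFn hdiag hf]
  exact hopt _
end

section
/- Let A ∈ ℝ^{n×n} be normalized (zero diagonal, identity optimal). Then replacing any cycle of a permutation by fixed points does not decrease the weight: for any permutation π and any set S ⊆ [n] that is invariant under π (π(S) = S), the permutation π' which equals π off S and is the identity on S satisfies Σ_i A_{i,π'(i)} ≥ Σ_i A_{i,π(i)}. -/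
/-!
Let `σ` be the permutation that agrees with `π` on `S` and fixes everything else, and `π'` the one
that fixes `S` and agrees with `π` elsewhere. Row by row, `{π i, σ i} = {π' i, i}`, so the weight of
`π` plus the (zero) trace equals the weight of `π'` plus the weight of `σ`; the latter is `≤ 0` by
optimality of the identity.
-/

open Finset

namespace Equiv.Perm

variable {α : Type*} [DecidableEq α]

theorem apply_mem_iff_of_image_eq {π : Perm α} {S : Finset α} (hS : S.image π = S) (x : α) :
    π x ∈ S ↔ x ∈ S := by
  conv_lhs => rw [← hS]
  exact π.injective.mem_finset_image

theorem sum_apply_add_sum_diag_eq [Fintype α] {M : Type*} [AddCommMonoid M] (A : α → α → M)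
    (π : Perm α) (S : Finset α) (hS : S.image π = S) :
    ∑ i, A i (π i) + ∑ i, A i i =
      ∑ i, A i (if i ∈ S then i else π i) +
        ∑ i, A i (ofSubtype (π.subtypePerm (apply_mem_iff_of_image_eq hS)) i) := by
  simp only [← sum_add_distrib]
  refine sum_congr rfl fun i _ => ?_
  by_cases hi : i ∈ S
  · rw [if_pos hi, ofSubtype_subtypePerm_of_mem _ hi, add_comm]
  · rw [if_neg hi, ofSubtype_subtypePerm_of_not_mem _ hi]

end Equiv.Perm

/-- In a normalized matrix, replacing any invariant set of a permutation by
fixed points does not decrease the weight. -/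
theorem replace_cycle_by_fixed_points {n : ℕ} (A : Matrix (Fin n) (Fin n) ℝ)
    (hdiag : ∀ i, A i i = 0)
    (hopt : ∀ π : Equiv.Perm (Fin n), ∑ i, A i (π i) ≤ 0)
    (π : Equiv.Perm (Fin n)) (S : Finset (Fin n)) (hS : S.image π = S) :
    ∑ i, A i (π i) ≤ ∑ i, A i (if i ∈ S then i else π i) := by
  have key := Equiv.Perm.sum_apply_add_sum_diag_eq A π S hS
  simp only [hdiag, sum_const_zero, add_zero] at key
  linarith [hopt (Equiv.Perm.ofSubtype (π.subtypePerm (Equiv.Perm.apply_mem_iff_of_image_eq hS)))]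
end

section
/- Tropical Jacobi identity: let A ∈ ℝ^{n×n} with per(A) = 0 and let I, J ⊆ [n] with |I| = |J| = k. Then either adj(A)^{∧k}_{I,J} = A^{∧(n−k)}_{Jᶜ,Iᶜ}, or there exist two distinct bijections π, σ : I → J such that Σ_{i∈I} adj(A)_{i,π(i)} = Σ_{i∈I} adj(A)_{i,σ(i)} = adj(A)^{∧k}_{I,J}. -/
/-- The tropical (max-plus) permanent of a real `n × n` matrix. -/
noncomputable def tropPer {n : ℕ} (A : Matrix (Fin n) (Fin n) ℝ) : ℝ :=
  Finset.univ.sup' Finset.univ_nonempty fun π : Equiv.Perm (Fin n) => ∑ i, A i (π i)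

/-- Tropical compound entry: the maximal weight of a bijection `I → J`,
`A^{∧k}_{I,J} = max over bijections σ : I → J of ∑_{i ∈ I} A_{i, σ(i)}`. -/
noncomputable def tropCompound {n : ℕ} (A : Matrix (Fin n) (Fin n) ℝ) (I J : Finset (Fin n))
    (h : I.card = J.card) : ℝ :=
  haveI : Nonempty ({x // x ∈ I} ≃ {x // x ∈ J}) :=
    ⟨Fintype.equivOfCardEq (by simpa using h)⟩
  Finset.univ.sup' Finset.univ_nonempty
    fun σ : {x // x ∈ I} ≃ {x // x ∈ J} => ∑ i, A i.1 (σ i).1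

/-- Tropical adjoint entry `adj(A)_{i,j} = per(A[{j}ᶜ, {i}ᶜ])`. -/
noncomputable def tropAdj {n : ℕ} (A : Matrix (Fin n) (Fin n) ℝ) (i j : Fin n) : ℝ :=
  tropCompound A ({j}ᶜ) ({i}ᶜ) (by simp [Finset.card_compl])

/-- The tropical adjoint matrix. -/
noncomputable def tropAdjM {n : ℕ} (A : Matrix (Fin n) (Fin n) ℝ) :
    Matrix (Fin n) (Fin n) ℝ := fun i j => tropAdj A i j

/-!
Since `per A = 0`, every permutation has weight at most `0` and some permutation `μ` has weight `0`.

`A^{∧(n-k)}_{Jᶜ,Iᶜ} ≤ adj(A)^{∧k}_{I,J}` always holds: given a permutation `σ` mapping `J` onto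
`I`, the cycle of `μ⁻¹σ` through a row of `J`, cut at its first return to `J`, is an alternating
path of entries of `μ` and `σ`; exchanging the two permutations along it produces a witness for
one adjoint entry and leaves a problem of size `k - 1`.

Conversely, if the optimal bijection `σ : J → I` for `adj(A)^{∧k}_{I,J}` is unique, one builds by
induction on `k` a single permutation `ρ` agreeing with `σ` on `J` whose weight is at least
`∑_{j ∈ J} (adj(A)_{σ j, j} + A_{j, σ j})`, which restricts to the required bijection `Jᶜ → Iᶜ`.
The witness `ξ` of the new adjoint entry is merged into `ρ` along a cycle of `ρ⁻¹ξ`; should that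
cycle pass through another row of `J`, the same exchange along the arc up to that row would give
a second optimal bijection.
-/

open Finset Equiv Equiv.Perm
open scoped Matrix

section Permutations

variable {α R : Type*} [Fintype α]

noncomputable def permWeight [AddCommMonoid R] (A : Matrix α α R) (π : Perm α) : R :=
  ∑ i, A i (π i)

variable [DecidableEq α]

def cycleMerge (φ ψ : Perm α) (b : α) : Perm α :=
  φ * (φ⁻¹ * ψ).cycleOf b

lemma cycleMerge_apply (φ ψ : Perm α) (b x : α) :
    cycleMerge φ ψ b x = if (φ⁻¹ * ψ).SameCycle b x then ψ x else φ x := by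
  rw [cycleMerge, mul_apply, cycleOf_apply]
  split_ifs <;> simp

lemma cycleMerge_comm_apply (φ ψ : Perm α) (b x : α) :
    cycleMerge ψ φ b x = if (φ⁻¹ * ψ).SameCycle b x then φ x else ψ x := by
  have h : ψ⁻¹ * φ = (φ⁻¹ * ψ)⁻¹ := by rw [mul_inv_rev, inv_inv]
  simp only [cycleMerge_apply, h, sameCycle_inv]

lemma permWeight_cycleMerge_add [AddCommMonoid R] (A : Matrix α α R) (φ ψ : Perm α)
    (b : α) :
    permWeight A (cycleMerge φ ψ b) + permWeight A (cycleMerge ψ φ b) =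
      permWeight A φ + permWeight A ψ := by
  simp only [permWeight, ← sum_add_distrib]
  refine sum_congr rfl fun x _ => ?_
  rw [cycleMerge_apply, cycleMerge_comm_apply]
  split_ifs
  · exact add_comm _ _
  · rfl

lemma permWeight_mul_swap [AddCommGroup R] (A : Matrix α α R) (π : Perm α) {a b : α}
    (hab : a ≠ b) :
    permWeight A (π * swap a b) =
      permWeight A π - A a (π a) - A b (π b) + A a (π b) + A b (π a) := by
  have hsplit : ∀ σ : Perm α, permWeight A σ = A a (σ a) + A b (σ b) +
      ∑ x ∈ (univ.erase a).erase b, A x (σ x) := fun σ => by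
    rw [permWeight, ← add_sum_erase _ _ (mem_univ a),
      ← add_sum_erase _ _ (mem_erase.2 ⟨hab.symm, mem_univ b⟩), add_assoc]
  rw [hsplit, hsplit π]
  have hrest : ∑ x ∈ (univ.erase a).erase b, A x ((π * swap a b) x) =
      ∑ x ∈ (univ.erase a).erase b, A x (π x) := by
    refine sum_congr rfl fun x hx => ?_
    obtain ⟨hxb, hxa, -⟩ := mem_erase.1 hx |>.imp_right mem_erase.1
    rw [mul_apply, swap_apply_of_ne_of_ne hxa hxb]
  rw [hrest]
  simp only [mul_apply, swap_apply_left, swap_apply_right]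
  abel

lemma exists_exchange [AddCommGroup R] (A : Matrix α α R) (φ ψ : Perm α) {a b : α} (hab : a ≠ b)
    (hsep : ¬(φ⁻¹ * (ψ * swap a b)).SameCycle a b) :
    ∃ σ₁ σ₂ : Perm α, σ₁ a = ψ b ∧ σ₂ b = φ a ∧
      (∀ x, ¬(φ⁻¹ * (ψ * swap a b)).SameCycle a x → σ₁ x = φ x) ∧
      permWeight A σ₁ + permWeight A σ₂ =
        permWeight A φ + permWeight A ψ - A a (φ a) - A b (ψ b) + A a (ψ b) + A b (φ a) := by
  have hρa : cycleMerge (ψ * swap a b) φ a a = φ a := by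
    rw [cycleMerge_comm_apply, if_pos (SameCycle.refl _ _)]
  have hρb : cycleMerge (ψ * swap a b) φ a b = ψ a := by
    rw [cycleMerge_comm_apply, if_neg hsep, mul_apply, swap_apply_right]
  refine ⟨cycleMerge φ (ψ * swap a b) a, cycleMerge (ψ * swap a b) φ a * swap a b, ?_, ?_,
    fun x hx => by rw [cycleMerge_apply, if_neg hx], ?_⟩
  · rw [cycleMerge_apply, if_pos (SameCycle.refl _ _), mul_apply, swap_apply_left]
  · rw [mul_apply, swap_apply_right, hρa]
  · rw [permWeight_mul_swap _ _ hab, hρa, hρb]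
    calc _ = (permWeight A (cycleMerge φ (ψ * swap a b) a) +
            permWeight A (cycleMerge (ψ * swap a b) φ a)) -
          A a (φ a) - A b (ψ a) + A a (ψ a) + A b (φ a) := by abel
      _ = _ := by rw [permWeight_cycleMerge_add, permWeight_mul_swap _ _ hab]; abel

/-- Take for `a = Z^e b` the first return of the `Z`-orbit of `b` to `S`: the cycle of
`Z * swap a b` through `a` is the arc `Z b, …, Z^e b`, which meets `S` only in `a`. -/
lemma exists_mem_eq_of_sameCycle_mul_swap (Z : Perm α) {S : Finset α} {b : α} (hb : b ∈ S) :
    ∃ a ∈ S, ∀ x ∈ S, (Z * swap a b).SameCycle a x → x = a := by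
  have hret : ∃ e, 0 < e ∧ (Z ^ e) b ∈ S :=
    ⟨orderOf Z, orderOf_pos Z, by rwa [pow_orderOf_eq_one, one_apply]⟩
  obtain ⟨e, ⟨he, ha⟩, hmin⟩ :
      ∃ e, (0 < e ∧ (Z ^ e) b ∈ S) ∧ ∀ s, 0 < s → s < e → (Z ^ s) b ∉ S :=
    ⟨Nat.find hret, Nat.find_spec hret, fun s hs hse h => Nat.find_min hret hse ⟨hs, h⟩⟩
  refine ⟨(Z ^ e) b, ha, ?_⟩
  set a := (Z ^ e) b
  have orbit : ∀ k : ℕ, ((Z * swap a b) ^ k) a = a ∨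
      ∃ s, 0 < s ∧ s < e ∧ ((Z * swap a b) ^ k) a = (Z ^ s) b := by
    intro k
    induction k with
    | zero => exact Or.inl rfl
    | succ k ih =>
      rw [pow_succ', mul_apply]
      rcases ih with h | ⟨s, hs, hse, h⟩
      · rw [h, mul_apply, swap_apply_left]
        rcases (Nat.one_le_iff_ne_zero.2 he.ne').eq_or_lt with h1 | h1
        · exact Or.inl (by subst h1; simp [a])
        · exact Or.inr ⟨1, one_pos, h1, by rw [pow_one]⟩
      · have hxS := hmin s hs hse
        rw [h, mul_apply, swap_apply_of_ne_of_ne (ne_of_mem_of_not_mem ha hxS).symm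
          (ne_of_mem_of_not_mem hb hxS).symm, ← mul_apply, ← pow_succ']
        rcases (Nat.succ_le_of_lt hse).eq_or_lt with h1 | h1
        · exact Or.inl (by subst h1; rfl)
        · exact Or.inr ⟨s + 1, s.succ_pos, h1, rfl⟩
  intro x hx hax
  obtain ⟨k, rfl⟩ := hax.exists_nat_pow_eq
  rcases orbit k with h | ⟨s, hs, hse, h⟩
  · exact h
  · exact absurd (h ▸ hx) (hmin s hs hse)

/-- The cycle of `μ⁻¹ * (σ * swap a j)` through `a` alternates between entries of `μ` and `σ`,
leading from the row `a` to the column `σ j`; exchanging `μ` and `σ * swap a j` along it gives `π`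
and `ρ`. -/
lemma exists_reroute [AddCommGroup R] (A : Matrix α α R)
    (μ σ : Perm α) {I J : Finset α} (hσ : ∀ x ∈ J, σ x ∈ I) (hJ : J.Nonempty) :
    ∃ a ∈ J, ∃ π ρ : Perm α, π a ∈ I ∧ (∀ x ∈ J.erase a, ρ x ∈ I.erase (π a)) ∧
      permWeight A π + ∑ x ∈ (J.erase a)ᶜ, A x (ρ x) =
        permWeight A μ + ∑ x ∈ Jᶜ, A x (σ x) + A a (π a) := by
  obtain ⟨j, hj⟩ := hJ
  obtain ⟨a, haJ, hcyc⟩ := exists_mem_eq_of_sameCycle_mul_swap (μ⁻¹ * σ) hj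
  set σ₁ := σ * swap a j with hσ₁
  have hσ₁a : σ₁ a = σ j := by rw [hσ₁, mul_apply, swap_apply_left]
  have hπa : cycleMerge μ σ₁ a a = σ j := by
    rw [cycleMerge_apply, if_pos (SameCycle.refl _ _), hσ₁a]
  have hρ : ∀ x ∈ J.erase a, cycleMerge σ₁ μ a x = σ₁ x := fun x hx => by
    rw [cycleMerge_comm_apply, hσ₁, ← mul_assoc,
      if_neg fun hsc => (mem_erase.1 hx).1 (hcyc x (mem_of_mem_erase hx) hsc)]
  have hσ₁J : ∀ x ∈ J.erase a, σ₁ x ∈ I.erase (σ j) := fun x hx => by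
    obtain ⟨hxa, hxJ⟩ := mem_erase.1 hx
    have hsw : swap a j x ∈ J.erase j := by
      rcases eq_or_ne x j with rfl | hxj
      · rw [swap_apply_right]; exact mem_erase.2 ⟨hxa.symm, haJ⟩
      · rw [swap_apply_of_ne_of_ne hxa hxj]; exact mem_erase.2 ⟨hxj, hxJ⟩
    exact mem_erase.2 ⟨σ.injective.ne (mem_erase.1 hsw).1, hσ _ (mem_of_mem_erase hsw)⟩
  have hoff : ∀ x ∈ Jᶜ, σ₁ x = σ x := fun x hx => by
    rw [mem_compl] at hx
    rw [hσ₁, mul_apply, swap_apply_of_ne_of_ne (ne_of_mem_of_not_mem haJ hx).symm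
      (ne_of_mem_of_not_mem hj hx).symm]
  refine ⟨a, haJ, cycleMerge μ σ₁ a, cycleMerge σ₁ μ a, hπa ▸ hσ j hj,
    fun x hx => hπa ▸ hρ x hx ▸ hσ₁J x hx, ?_⟩
  have hρsum : ∑ x ∈ (J.erase a)ᶜ, A x (cycleMerge σ₁ μ a x) + ∑ x ∈ J.erase a, A x (σ₁ x) =
      permWeight A (cycleMerge σ₁ μ a) := by
    rw [← sum_congr (f := fun x => A x (cycleMerge σ₁ μ a x)) rfl
      fun x hx => congrArg (A x) (hρ x hx)]
    exact sum_compl_add_sum _ _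
  have hσ₁sum : permWeight A σ₁ =
      ∑ x ∈ Jᶜ, A x (σ x) + (A a (σ j) + ∑ x ∈ J.erase a, A x (σ₁ x)) := by
    have hsplit := sum_compl_add_sum J fun x => A x (σ₁ x)
    rw [← add_sum_erase _ _ haJ, sum_congr rfl fun x hx => congrArg (A x) (hoff x hx)] at hsplit
    rw [hσ₁a] at hsplit
    exact hsplit.symm
  calc _ = (permWeight A (cycleMerge μ σ₁ a) + permWeight A (cycleMerge σ₁ μ a)) -
        ∑ x ∈ J.erase a, A x (σ₁ x) := by rw [← hρsum]; abel
    _ = _ := by rw [permWeight_cycleMerge_add, hσ₁sum, hπa]; abel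

end Permutations

section Bijections

variable {α R : Type*}

lemma mem_iff_apply_mem_of_card_eq {I J : Finset α} (h : I.card = J.card) {σ : Perm α}
    (hσ : ∀ x ∈ I, σ x ∈ J) (x : α) : x ∈ I ↔ σ x ∈ J := by
  have himg : I.map σ.toEmbedding = J := eq_of_subset_of_card_le
    (fun y hy => by obtain ⟨x, hx, rfl⟩ := mem_map.1 hy; exact hσ x hx) (by rw [card_map, h])
  rw [← himg]
  exact (mem_map' σ.toEmbedding).symm

lemma forall_mem_compl_of_card_eq [Fintype α] [DecidableEq α] {I J : Finset α}
    (h : I.card = J.card) {σ : Perm α} (hσ : ∀ x ∈ I, σ x ∈ J) : ∀ x ∈ Iᶜ, σ x ∈ Jᶜ := fun x => by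
  simpa only [mem_compl] using (mem_iff_apply_mem_of_card_eq h hσ x).not.1

lemma exists_perm_extend [DecidableEq α] [AddCommMonoid R] (B : Matrix α α R)
    {I J : Finset α} {i j : α} (hi : i ∈ I) (hj : j ∈ J) (σ : Perm α)
    (hσ : ∀ x ∈ I.erase i, σ x ∈ J.erase j) :
    ∃ τ : Perm α, (∀ x ∈ I, τ x ∈ J) ∧ τ i = j ∧ (∀ x ∈ I.erase i, τ x = σ x) ∧
      ∑ x ∈ I, B x (τ x) = B i j + ∑ x ∈ I.erase i, B x (σ x) := by
  have hτ : ∀ x ∈ I.erase i, (swap (σ i) j * σ) x = σ x := fun x hx => by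
    rw [mul_apply, swap_apply_of_ne_of_ne (σ.injective.ne (mem_erase.1 hx).1)
      (mem_erase.1 (hσ x hx)).1]
  have hτi : (swap (σ i) j * σ) i = j := by rw [mul_apply, swap_apply_left]
  refine ⟨swap (σ i) j * σ, fun x hx => ?_, hτi, hτ, ?_⟩
  · by_cases hxi : x = i
    · rwa [hxi, hτi]
    · have hx' := mem_erase.2 ⟨hxi, hx⟩
      exact hτ x hx' ▸ mem_of_mem_erase (hσ x hx')
  · rw [← add_sum_erase _ _ hi, hτi, sum_congr rfl fun x hx => by rw [hτ x hx]]

/-- Bijections `I → J` are represented by permutations of the ambient type mapping `I` into `J`. -/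
def IsStrictMaxOn (B : Matrix α α ℝ) (I J : Finset α) (σ : Perm α) : Prop :=
  ∀ σ' : Perm α, (∀ x ∈ I, σ' x ∈ J) → (∃ x ∈ I, σ' x ≠ σ x) →
    ∑ x ∈ I, B x (σ' x) < ∑ x ∈ I, B x (σ x)

lemma IsStrictMaxOn.erase [DecidableEq α] {B : Matrix α α ℝ} {I J : Finset α} {σ : Perm α}
    (hmax : IsStrictMaxOn B I J σ) (hσ : ∀ x ∈ I, σ x ∈ J) {i : α} (hi : i ∈ I) :
    IsStrictMaxOn B (I.erase i) (J.erase (σ i)) σ := by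
  rintro σ' hσ' ⟨x, hx, hne⟩
  obtain ⟨τ, hτJ, hτi, hτ, hsum⟩ := exists_perm_extend B hi (hσ i hi) σ' hσ'
  have hlt := hmax τ hτJ ⟨x, mem_of_mem_erase hx, by rwa [hτ x hx]⟩
  rw [hsum, ← add_sum_erase _ _ hi] at hlt
  linarith

end Bijections

section Compound

variable {n : ℕ}

lemma sum_le_tropCompound (B : Matrix (Fin n) (Fin n) ℝ) {I J : Finset (Fin n)}
    (h : I.card = J.card) (σ : Perm (Fin n)) (hσ : ∀ x ∈ I, σ x ∈ J) :
    ∑ x ∈ I, B x (σ x) ≤ tropCompound B I J h := by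
  rw [← sum_coe_sort I]
  exact le_sup' (fun e : {x // x ∈ I} ≃ {x // x ∈ J} => ∑ i, B i.1 (e i).1)
    (mem_univ (σ.subtypeEquiv (mem_iff_apply_mem_of_card_eq h hσ)))

lemma exists_sum_eq_tropCompound (B : Matrix (Fin n) (Fin n) ℝ) {I J : Finset (Fin n)}
    (h : I.card = J.card) :
    ∃ σ : Perm (Fin n), (∀ x ∈ I, σ x ∈ J) ∧ ∑ x ∈ I, B x (σ x) = tropCompound B I J h := by
  have : Nonempty ({x // x ∈ I} ≃ {x // x ∈ J}) := ⟨Fintype.equivOfCardEq (by simpa using h)⟩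
  obtain ⟨e, -, he⟩ := exists_mem_eq_sup' univ_nonempty
    (fun e : {x // x ∈ I} ≃ {x // x ∈ J} => ∑ i, B i.1 (e i).1)
  refine ⟨e.extendSubtype, fun x hx => e.extendSubtype_mem x hx, ?_⟩
  rw [← sum_coe_sort I]
  simp only [e.extendSubtype_apply_of_mem _ (coe_mem _)]
  exact he.symm

lemma add_tropCompound_erase_le (B : Matrix (Fin n) (Fin n) ℝ) {I J : Finset (Fin n)} {i j : Fin n}
    (h : I.card = J.card) (h' : (I.erase i).card = (J.erase j).card) (hi : i ∈ I) (hj : j ∈ J) :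
    B i j + tropCompound B (I.erase i) (J.erase j) h' ≤ tropCompound B I J h := by
  obtain ⟨σ, hσ, hsum⟩ := exists_sum_eq_tropCompound B h'
  obtain ⟨τ, hτJ, -, -, hτsum⟩ := exists_perm_extend B hi hj σ hσ
  exact hsum ▸ hτsum ▸ sum_le_tropCompound B h τ hτJ

lemma IsStrictMaxOn.add_tropCompound_erase_lt {B : Matrix (Fin n) (Fin n) ℝ}
    {I J : Finset (Fin n)} {σ : Perm (Fin n)} (hmax : IsStrictMaxOn B I J σ) {i j : Fin n}
    (h' : (I.erase i).card = (J.erase j).card) (hi : i ∈ I) (hj : j ∈ J) (hne : σ i ≠ j) :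
    B i j + tropCompound B (I.erase i) (J.erase j) h' < ∑ x ∈ I, B x (σ x) := by
  obtain ⟨σ', hσ', hsum⟩ := exists_sum_eq_tropCompound B h'
  obtain ⟨τ, hτJ, hτi, -, hτsum⟩ := exists_perm_extend B hi hj σ' hσ'
  exact hsum ▸ hτsum ▸ hmax τ hτJ ⟨i, hi, hτi ▸ hne.symm⟩

lemma permWeight_le_tropPer (A : Matrix (Fin n) (Fin n) ℝ) (π : Perm (Fin n)) :
    permWeight A π ≤ tropPer A :=
  le_sup' (fun π : Perm (Fin n) => ∑ i, A i (π i)) (mem_univ π)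

lemma exists_permWeight_eq_tropPer (A : Matrix (Fin n) (Fin n) ℝ) :
    ∃ π : Perm (Fin n), permWeight A π = tropPer A :=
  let ⟨π, _, h⟩ := exists_mem_eq_sup' univ_nonempty fun π : Perm (Fin n) => ∑ i, A i (π i)
  ⟨π, h.symm⟩

lemma permWeight_add_le_cycleMerge (A : Matrix (Fin n) (Fin n) ℝ) (φ ψ : Perm (Fin n))
    (b : Fin n) :
    permWeight A φ + permWeight A ψ ≤ permWeight A (cycleMerge φ ψ b) + tropPer A := by
  rw [← permWeight_cycleMerge_add A φ ψ b]
  linarith [permWeight_le_tropPer A (cycleMerge ψ φ b)]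

lemma permWeight_eq_sum_compl_singleton_add (A : Matrix (Fin n) (Fin n) ℝ) (π : Perm (Fin n))
    (j : Fin n) : permWeight A π = ∑ x ∈ ({j}ᶜ : Finset (Fin n)), A x (π x) + A j (π j) := by
  rw [permWeight, ← sum_compl_add_sum {j}, sum_singleton]

lemma permWeight_sub_le_tropAdjM (A : Matrix (Fin n) (Fin n) ℝ) {π : Perm (Fin n)} {i j : Fin n}
    (hπ : π j = i) : permWeight A π - A j i ≤ tropAdjM A i j := by
  have hmaps : ∀ x ∈ ({j}ᶜ : Finset (Fin n)), π x ∈ ({i}ᶜ : Finset (Fin n)) := by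
    simp [← hπ]
  rw [permWeight_eq_sum_compl_singleton_add A π j, hπ, add_sub_cancel_right]
  exact sum_le_tropCompound A (by simp [card_compl]) π hmaps

lemma exists_permWeight_sub_eq_tropAdjM (A : Matrix (Fin n) (Fin n) ℝ) (i j : Fin n) :
    ∃ π : Perm (Fin n), π j = i ∧ permWeight A π - A j i = tropAdjM A i j := by
  obtain ⟨π, hπ, hsum⟩ := exists_sum_eq_tropCompound A
    (I := {j}ᶜ) (J := {i}ᶜ) (by simp [card_compl])
  have hπj : π j = i := by
    simpa using (mem_iff_apply_mem_of_card_eq (by simp [card_compl]) hπ j).not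
  refine ⟨π, hπj, ?_⟩
  rw [permWeight_eq_sum_compl_singleton_add A π j, hπj, hsum]
  simp [tropAdjM, tropAdj]

lemma sum_compl_le_tropCompound_transpose_tropAdjM {A : Matrix (Fin n) (Fin n) ℝ}
    (hper : tropPer A = 0) {I J : Finset (Fin n)} (h : J.card = I.card) (σ : Perm (Fin n))
    (hσ : ∀ x ∈ J, σ x ∈ I) :
    ∑ x ∈ Jᶜ, A x (σ x) ≤ tropCompound (tropAdjM A)ᵀ J I h := by
  obtain ⟨μ, hμ⟩ := exists_permWeight_eq_tropPer A
  obtain ⟨k, hk⟩ : ∃ k, J.card = k := ⟨_, rfl⟩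
  induction k generalizing I J σ with
  | zero =>
    obtain rfl := card_eq_zero.1 hk
    obtain rfl := card_eq_zero.1 (h.symm.trans hk)
    have h0 := sum_le_tropCompound (tropAdjM A)ᵀ h σ (by simp)
    rw [sum_empty] at h0
    rw [compl_empty]
    exact (hper ▸ permWeight_le_tropPer A σ).trans h0
  | succ k ih =>
    obtain ⟨a, haJ, π, ρ, hπa, hρ, hsum⟩ :=
      exists_reroute A μ σ hσ (card_pos.1 (by omega))
    have hcard : (J.erase a).card = (I.erase (π a)).card := by
      rw [card_erase_of_mem haJ, card_erase_of_mem hπa, h]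
    have hrest := ih hcard ρ hρ (by rw [card_erase_of_mem haJ, hk]; rfl)
    have hadj := permWeight_sub_le_tropAdjM A (rfl : π a = π a)
    have hstep := add_tropCompound_erase_le (tropAdjM A)ᵀ h hcard haJ hπa
    rw [Matrix.transpose_apply] at hstep
    linarith

/-- If the cycle through `a` met `J` only in `a`, exchanging `ρ` and `ξ` along it would yield a
bijection `J → I` other than `σ` whose adjoint weight is at least that of `σ`. -/
lemma IsStrictMaxOn.exists_mem_sameCycle_mul_swap {A : Matrix (Fin n) (Fin n) ℝ}
    (hper : tropPer A = 0) {I J : Finset (Fin n)} (h : J.card = I.card) {σ : Perm (Fin n)}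
    (hσ : ∀ x ∈ J, σ x ∈ I) (hmax : IsStrictMaxOn (tropAdjM A)ᵀ J I σ) {b : Fin n} (hb : b ∈ J)
    {ρ ξ : Perm (Fin n)} (hρσ : ∀ x ∈ J.erase b, ρ x = σ x)
    (hρ : ∑ x ∈ J.erase b, (tropAdjM A)ᵀ x (σ x) + ∑ x ∈ J.erase b, A x (σ x) ≤ permWeight A ρ)
    (hξb : ξ b = σ b) (hξ : permWeight A ξ - A b (σ b) = tropAdjM A (σ b) b)
    {a : Fin n} (haJ : a ∈ J) (hab : a ≠ b) :
    ∃ x ∈ J, x ≠ a ∧ (ρ⁻¹ * ξ * swap a b).SameCycle a x := by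
  by_contra! hcyc
  simp only [mul_assoc] at hcyc
  have haJ' : a ∈ J.erase b := mem_erase.2 ⟨hab, haJ⟩
  obtain ⟨σ₁, σ₂, hσ₁a, hσ₂b, hσ₁, hw⟩ := exists_exchange A ρ ξ hab (hcyc b hb hab.symm)
  have hσ₁J : ∀ x ∈ J.erase b, σ₁ x = σ (swap a b x) := fun x hx => by
    obtain ⟨hxb, hxJ⟩ := mem_erase.1 hx
    rcases eq_or_ne x a with rfl | hxa
    · rw [hσ₁a, hξb, swap_apply_left]
    · rw [hσ₁ x (hcyc x hxJ hxa), hρσ x hx, swap_apply_of_ne_of_ne hxa hxb]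
  have hmaps : ∀ x ∈ J.erase b, σ₁ x ∈ I.erase (σ a) := fun x hx => by
    obtain ⟨hxb, hxJ⟩ := mem_erase.1 hx
    have hsw : swap a b x ∈ J.erase a := by
      rcases eq_or_ne x a with rfl | hxa
      · rw [swap_apply_left]; exact mem_erase.2 ⟨hab.symm, hb⟩
      · rw [swap_apply_of_ne_of_ne hxa hxb]; exact mem_erase.2 ⟨hxa, hxJ⟩
    rw [hσ₁J x hx]
    exact mem_erase.2 ⟨σ.injective.ne (mem_erase.1 hsw).1, hσ _ (mem_of_mem_erase hsw)⟩
  have hcard : (J.erase b).card = (I.erase (σ a)).card := by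
    rw [card_erase_of_mem hb, card_erase_of_mem (hσ a haJ), h]
  have hwalk := sum_compl_le_tropCompound_transpose_tropAdjM hper hcard σ₁ hmaps
  have hlt := hmax.add_tropCompound_erase_lt hcard hb (hσ a haJ) (σ.injective.ne hab.symm)
  have hadj := permWeight_sub_le_tropAdjM A (hσ₂b.trans (hρσ a haJ'))
  have hσ₁sum : ∑ x ∈ J.erase b, A x (σ₁ x) =
      A a (σ b) + ∑ x ∈ (J.erase b).erase a, A x (σ x) := by
    rw [← add_sum_erase _ _ haJ', hσ₁J a haJ', swap_apply_left]
    refine congrArg _ (sum_congr rfl fun x hx => ?_)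
    obtain ⟨hxa, hx⟩ := mem_erase.1 hx
    rw [hσ₁J x hx, swap_apply_of_ne_of_ne hxa (mem_erase.1 hx).1]
  have hσ₁w : ∑ x ∈ (J.erase b)ᶜ, A x (σ₁ x) + ∑ x ∈ J.erase b, A x (σ₁ x) = permWeight A σ₁ :=
    sum_compl_add_sum _ _
  rw [hρσ a haJ', hξb] at hw
  rw [← add_sum_erase _ (fun x => A x (σ x)) haJ'] at hρ
  rw [← add_sum_erase _ _ hb] at hlt
  simp only [Matrix.transpose_apply] at hlt hρ
  linarith

lemma IsStrictMaxOn.exists_perm_of_erase {A : Matrix (Fin n) (Fin n) ℝ}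
    (hper : tropPer A = 0) {I J : Finset (Fin n)} (h : J.card = I.card) {σ : Perm (Fin n)}
    (hσ : ∀ x ∈ J, σ x ∈ I) (hmax : IsStrictMaxOn (tropAdjM A)ᵀ J I σ) {b : Fin n} (hb : b ∈ J)
    {ρ : Perm (Fin n)} (hρσ : ∀ x ∈ J.erase b, ρ x = σ x)
    (hρ : ∑ x ∈ J.erase b, (tropAdjM A)ᵀ x (σ x) + ∑ x ∈ J.erase b, A x (σ x) ≤ permWeight A ρ) :
    ∃ ρ' : Perm (Fin n), (∀ x ∈ J, ρ' x = σ x) ∧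
      ∑ x ∈ J, (tropAdjM A)ᵀ x (σ x) + ∑ x ∈ J, A x (σ x) ≤ permWeight A ρ' := by
  obtain ⟨ξ, hξb, hξ⟩ := exists_permWeight_sub_eq_tropAdjM A (σ b) b
  obtain ⟨a, haJ, hcyc⟩ := exists_mem_eq_of_sameCycle_mul_swap (ρ⁻¹ * ξ) hb
  rcases eq_or_ne a b with rfl | hab
  · rw [swap_self, ← Perm.one_def, mul_one] at hcyc
    refine ⟨cycleMerge ρ ξ a, fun x hx => ?_, ?_⟩
    · rcases eq_or_ne x a with rfl | hxa
      · rw [cycleMerge_apply, if_pos (SameCycle.refl _ _), hξb]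
      · rw [cycleMerge_apply, if_neg fun hsc => hxa (hcyc x hx hsc),
          hρσ x (mem_erase.2 ⟨hxa, hx⟩)]
    · have hmerge := permWeight_add_le_cycleMerge A ρ ξ a
      rw [← add_sum_erase _ _ hb, ← add_sum_erase _ _ hb, Matrix.transpose_apply]
      linarith
  · obtain ⟨x, hxJ, hxa, hsc⟩ :=
      hmax.exists_mem_sameCycle_mul_swap hper h hσ hb hρσ hρ hξb hξ haJ hab
    exact absurd (hcyc x hxJ hsc) hxa

lemma IsStrictMaxOn.exists_perm {A : Matrix (Fin n) (Fin n) ℝ} (hper : tropPer A = 0)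
    {I J : Finset (Fin n)} (h : J.card = I.card) {σ : Perm (Fin n)} (hσ : ∀ x ∈ J, σ x ∈ I)
    (hmax : IsStrictMaxOn (tropAdjM A)ᵀ J I σ) :
    ∃ ρ : Perm (Fin n), (∀ x ∈ J, ρ x = σ x) ∧
      ∑ x ∈ J, (tropAdjM A)ᵀ x (σ x) + ∑ x ∈ J, A x (σ x) ≤ permWeight A ρ := by
  obtain ⟨k, hk⟩ : ∃ k, J.card = k := ⟨_, rfl⟩
  induction k generalizing I J with
  | zero =>
    obtain rfl := card_eq_zero.1 hk
    obtain ⟨μ, hμ⟩ := exists_permWeight_eq_tropPer A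
    exact ⟨μ, by simp, by simp [hμ, hper]⟩
  | succ k ih =>
    obtain ⟨b, hb⟩ := card_pos.1 (by omega : 0 < J.card)
    have hcard : (J.erase b).card = (I.erase (σ b)).card := by
      rw [card_erase_of_mem hb, card_erase_of_mem (hσ b hb), h]
    have hσ' : ∀ x ∈ J.erase b, σ x ∈ I.erase (σ b) := fun x hx =>
      mem_erase.2 ⟨σ.injective.ne (mem_erase.1 hx).1, hσ x (mem_of_mem_erase hx)⟩
    obtain ⟨ρ, hρσ, hρ⟩ := ih hcard hσ' (hmax.erase hσ hb) (by rw [card_erase_of_mem hb, hk]; rfl)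
    exact hmax.exists_perm_of_erase hper h hσ hb hρσ hρ

lemma tropCompound_transpose_le (B : Matrix (Fin n) (Fin n) ℝ) {I J : Finset (Fin n)}
    (h : I.card = J.card) (h' : J.card = I.card) :
    tropCompound Bᵀ J I h' ≤ tropCompound B I J h := by
  obtain ⟨σ, hσ, hsum⟩ := exists_sum_eq_tropCompound Bᵀ h'
  have hiff := mem_iff_apply_mem_of_card_eq h' hσ
  rw [← hsum, sum_equiv σ hiff (g := fun i => B i (σ⁻¹ i)) fun x _ => by simp]
  exact sum_le_tropCompound B h σ⁻¹ fun i hi => (hiff _).2 (by simpa using hi)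

lemma tropCompound_transpose (B : Matrix (Fin n) (Fin n) ℝ) {I J : Finset (Fin n)}
    (h : I.card = J.card) : tropCompound Bᵀ J I h.symm = tropCompound B I J h :=
  le_antisymm (tropCompound_transpose_le B h h.symm)
    (by simpa using tropCompound_transpose_le Bᵀ h.symm h)

lemma tropCompound_compl_le_tropCompound_tropAdjM {A : Matrix (Fin n) (Fin n) ℝ}
    (hper : tropPer A = 0) {I J : Finset (Fin n)} (h : I.card = J.card)
    (h' : Jᶜ.card = Iᶜ.card) :
    tropCompound A Jᶜ Iᶜ h' ≤ tropCompound (tropAdjM A) I J h := by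
  obtain ⟨σ, hσ, hsum⟩ := exists_sum_eq_tropCompound A h'
  have hσJ : ∀ x ∈ J, σ x ∈ I := by simpa using forall_mem_compl_of_card_eq h' hσ
  rw [← hsum, ← tropCompound_transpose]
  exact sum_compl_le_tropCompound_transpose_tropAdjM hper h.symm σ hσJ

lemma IsStrictMaxOn.tropCompound_tropAdjM_le {A : Matrix (Fin n) (Fin n) ℝ}
    (hper : tropPer A = 0) {I J : Finset (Fin n)} (h : I.card = J.card)
    (h' : Jᶜ.card = Iᶜ.card) {σ : Perm (Fin n)} (hσ : ∀ x ∈ J, σ x ∈ I)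
    (hσmax : ∑ x ∈ J, (tropAdjM A)ᵀ x (σ x) = tropCompound (tropAdjM A) I J h)
    (hmax : IsStrictMaxOn (tropAdjM A)ᵀ J I σ) :
    tropCompound (tropAdjM A) I J h ≤ tropCompound A Jᶜ Iᶜ h' := by
  obtain ⟨ρ, hρσ, hρ⟩ := hmax.exists_perm hper h.symm hσ
  have hρJ : ∀ x ∈ J, ρ x ∈ I := fun x hx => hρσ x hx ▸ hσ x hx
  have hsplit : ∑ x ∈ Jᶜ, A x (ρ x) + ∑ x ∈ J, A x (ρ x) = permWeight A ρ :=
    sum_compl_add_sum _ _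
  rw [sum_congr rfl fun x hx => congrArg (A x) (hρσ x hx)] at hsplit
  have hle := sum_le_tropCompound A h' ρ (forall_mem_compl_of_card_eq h.symm hρJ)
  linarith

lemma exists_ne_of_not_isStrictMaxOn (B : Matrix (Fin n) (Fin n) ℝ) {I J : Finset (Fin n)}
    (h : I.card = J.card) {σ : Perm (Fin n)} (hσ : ∀ x ∈ J, σ x ∈ I)
    (hσmax : ∑ x ∈ J, Bᵀ x (σ x) = tropCompound B I J h) (hns : ¬IsStrictMaxOn Bᵀ J I σ) :
    ∃ π τ : {x // x ∈ I} ≃ {x // x ∈ J}, π ≠ τ ∧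
      ∑ i, B i.1 (π i).1 = tropCompound B I J h ∧ ∑ i, B i.1 (τ i).1 = tropCompound B I J h := by
  have restrict : ∀ τ : Perm (Fin n), (∀ x ∈ J, τ x ∈ I) →
      ∃ e : {x // x ∈ I} ≃ {x // x ∈ J}, (∀ y, (e.symm y).1 = τ y) ∧
        ∑ i, B i.1 (e i).1 = ∑ x ∈ J, Bᵀ x (τ x) := fun τ hτ => by
    set e := τ.subtypeEquiv (mem_iff_apply_mem_of_card_eq h.symm hτ)
    refine ⟨e.symm, fun y => rfl, ?_⟩
    rw [← e.sum_comp, ← sum_coe_sort J]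
    simp [e]
  simp only [IsStrictMaxOn, not_forall, not_lt] at hns
  obtain ⟨σ', hσ', ⟨x, hx, hne⟩, hge⟩ := hns
  obtain ⟨e', he', hsum'⟩ := restrict σ' hσ'
  obtain ⟨e, he, hsum⟩ := restrict σ hσ
  refine ⟨e', e, fun heq => hne ?_, ?_, hsum.trans hσmax⟩
  · rw [← he' ⟨x, hx⟩, ← he ⟨x, hx⟩, heq]
  · refine hsum'.trans (le_antisymm ?_ (hσmax ▸ hge))
    exact tropCompound_transpose B h ▸ sum_le_tropCompound Bᵀ h.symm σ' hσ'

end Compound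

/-- Tropical Jacobi identity: if `per(A) = 0` then either
`adj(A)^{∧k}_{I,J} = A^{∧(n−k)}_{Jᶜ,Iᶜ}`, or the optimal value
`adj(A)^{∧k}_{I,J}` is attained by two distinct bijections `I → J`. -/
theorem tropical_jacobi_identity {n : ℕ} (A : Matrix (Fin n) (Fin n) ℝ)
    (hper : tropPer A = 0) (I J : Finset (Fin n)) (h : I.card = J.card) :
    tropCompound (tropAdjM A) I J h =
        tropCompound A Jᶜ Iᶜ (by simp [Finset.card_compl, h]) ∨
    ∃ π σ : {x // x ∈ I} ≃ {x // x ∈ J}, π ≠ σ ∧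
      (∑ i, tropAdjM A i.1 (π i).1) = tropCompound (tropAdjM A) I J h ∧
      (∑ i, tropAdjM A i.1 (σ i).1) = tropCompound (tropAdjM A) I J h := by
  obtain ⟨σ, hσ, hσmax⟩ := exists_sum_eq_tropCompound (tropAdjM A)ᵀ h.symm
  rw [tropCompound_transpose _ h] at hσmax
  by_cases hmax : IsStrictMaxOn (tropAdjM A)ᵀ J I σ
  · exact Or.inl (le_antisymm (hmax.tropCompound_tropAdjM_le hper h _ hσ hσmax)
      (tropCompound_compl_le_tropCompound_tropAdjM hper h _))
  · exact Or.inr (exists_ne_of_not_isStrictMaxOn (tropAdjM A) h hσ hσmax hmax)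
end

section
/- Let A ∈ ℝ^{n×n} be normalized (zero diagonal, identity optimal), and let τ : Iᶜ → Jᶜ be a bijection attaining A^{∧(n−k)}_{Iᶜ,Jᶜ}, for I, J ⊆ [n] with |I|=|J|=k. Then adj(A)^{∧k}_{J,I} ≥ A^{∧(n−k)}_{Iᶜ,Jᶜ}: the value of the optimal bijection on the complements is always a lower bound for the optimal compound-adjoint value. -/
/-!
Extend a bijection `σ : Iᶜ → Jᶜ` to a permutation `π` mapping `I` onto `J`. Following `π` from a
point outside `I`, either the orbit never meets `I` — such points form `π`-invariant cycles, whose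
weight is `≤ 0` because the identity is optimal — or it first enters `I` at some `i`. The points
entering at `i` form a path from some `j ∈ J` to `i`; moving them by `π` and fixing everything else
is a bijection `{i}ᶜ → {j}ᶜ` of the same weight (the diagonal vanishes), so the path weighs at most
`adj(A)_{j,i}`. Distinct `i` give distinct `j`, so summing over `I` bounds the weight of `σ` by the
weight of a bijection `J → I` in `adj(A)`.
-/

open Finset Function

section FirstHit

variable {α : Type*}

noncomputable def firstHit (f : α → α) (s : Set α) (x : α) : Option α :=
  open Classical in
  if h : ∃ k, f^[k] x ∈ s then some (f^[Nat.find h] x) else none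

variable {f : α → α} {s : Set α} {x y : α}

theorem firstHit_of_mem (hx : x ∈ s) : firstHit f s x = some x := by
  classical
  have h : ∃ k, f^[k] x ∈ s := ⟨0, hx⟩
  simp [firstHit, h, (Nat.find_eq_zero h).2 hx]

theorem mem_of_firstHit_eq_some (h : firstHit f s x = some y) : y ∈ s := by
  classical
  unfold firstHit at h
  split_ifs at h with hx
  exact Option.some_injective _ h ▸ Nat.find_spec hx

theorem firstHit_apply_of_notMem (hx : x ∉ s) : firstHit f s (f x) = firstHit f s x := by
  classical
  have hiff : (∃ k, f^[k] (f x) ∈ s) ↔ ∃ k, f^[k] x ∈ s :=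
    ⟨fun ⟨k, hk⟩ => ⟨k + 1, hk⟩, fun ⟨k, hk⟩ => ⟨k - 1, by
      cases k with
      | zero => exact absurd hk hx
      | succ k => exact hk⟩⟩
  by_cases h : ∃ k, f^[k] x ∈ s
  · rw [firstHit, firstHit, dif_pos h, dif_pos (hiff.2 h)]
    congr 1
    rw [Nat.find_comp_succ h (hiff.2 h) hx]
    rfl
  · rw [firstHit, firstHit, dif_neg h, dif_neg (mt hiff.1 h)]

end FirstHit

section HitFiber

variable {α : Type*} [Fintype α] [DecidableEq α]

noncomputable def hitFiber (f : α → α) (s : Finset α) (i : α) : Finset α :=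
  {x ∈ sᶜ | firstHit f s x = some i}

variable {f : α → α} {s : Finset α} {i x : α}

theorem mem_insert_hitFiber_iff (hi : i ∈ s) :
    x ∈ insert i (hitFiber f s i) ↔ firstHit f s x = some i := by
  by_cases hx : x ∈ s
  · simp [hitFiber, hx, firstHit_of_mem (s := (s : Set α)) hx]
  · simp [hitFiber, hx, show x ≠ i from fun h => hx (h ▸ hi)]

theorem mem_hitFiber_iff_apply_mem_insert (hi : i ∈ s) (hx : x ∉ s) :
    x ∈ hitFiber f s i ↔ f x ∈ insert i (hitFiber f s i) := by
  rw [mem_insert_hitFiber_iff hi, firstHit_apply_of_notMem (s := (s : Set α)) hx, hitFiber,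
    mem_filter, mem_compl, and_iff_right hx]

end HitFiber

theorem sum_ite_mem_of_diag_eq_zero {α R : Type*} [DecidableEq α] [AddCommMonoid R] {A : Matrix α α R} (hdiag : ∀ i, A i i = 0) (f : α → α)
    {S U : Finset α} (hSU : S ⊆ U) :
    ∑ x ∈ U, A x (if x ∈ S then f x else x) = ∑ x ∈ S, A x (f x) := by
  simp only [apply_ite (A _), hdiag, sum_ite_mem, inter_eq_right.2 hSU]

theorem injOn_ite_mem {α : Type*} [DecidableEq α] {f : α → α} (hf : Injective f)
    {S : Finset α} {U : Set α} (hS : ∀ x ∈ S, ∀ y ∈ U, y ∉ S → f x ≠ y) :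
    Set.InjOn (fun x => if x ∈ S then f x else x) U := by
  intro x hx y hy hxy
  by_cases hxS : x ∈ S <;> by_cases hyS : y ∈ S <;> simp only [hxS, hyS, if_true, if_false] at hxy
  · exact hf hxy
  · exact absurd hxy (hS x hxS y hy hyS)
  · exact absurd hxy.symm (hS y hyS x hx hxS)
  · exact hxy

theorem sum_le_zero_of_mapsTo {α : Type*} [Fintype α] [DecidableEq α] {A : Matrix α α ℝ}
    (hdiag : ∀ i, A i i = 0) (hopt : ∀ π : Equiv.Perm α, ∑ i, A i (π i) ≤ 0)
    (π : Equiv.Perm α) {C : Finset α} (hC : ∀ x ∈ C, π x ∈ C) :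
    ∑ x ∈ C, A x (π x) ≤ 0 := by
  have hinj : Injective fun x => if x ∈ C then π x else x :=
    Set.injOn_univ.1 <| injOn_ite_mem π.injective fun x hx y _ hy h => hy (h ▸ hC x hx)
  calc ∑ x ∈ C, A x (π x) = ∑ x, A x (Equiv.ofBijective _ hinj.bijective_of_finite x) :=
        (sum_ite_mem_of_diag_eq_zero hdiag π (subset_univ C)).symm
    _ ≤ 0 := hopt _

section TropCompound

open Matrix

variable {n : ℕ} (A : Matrix (Fin n) (Fin n) ℝ) {I J : Finset (Fin n)}

theorem le_tropCompound (h : I.card = J.card) (σ : {x // x ∈ I} ≃ {x // x ∈ J}) :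
    ∑ i, A i.1 (σ i).1 ≤ tropCompound A I J h :=
  Finset.le_sup' (fun σ : {x // x ∈ I} ≃ {x // x ∈ J} => ∑ i, A i.1 (σ i).1) (mem_univ σ)

theorem tropCompound_le (h : I.card = J.card) {b : ℝ}
    (hb : ∀ σ : {x // x ∈ I} ≃ {x // x ∈ J}, ∑ i, A i.1 (σ i).1 ≤ b) :
    tropCompound A I J h ≤ b :=
  Finset.sup'_le _ _ fun σ _ => hb σ

theorem tropCompound_le_tropCompound_transpose (h : I.card = J.card) :
    tropCompound A I J h ≤ tropCompound Aᵀ J I h.symm :=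
  tropCompound_le A h fun σ =>
    calc ∑ i, A i.1 (σ i).1 = ∑ j, Aᵀ j.1 (σ.symm j).1 :=
          Fintype.sum_equiv σ _ _ fun i => by simp
      _ ≤ _ := le_tropCompound Aᵀ h.symm σ.symm

theorem sum_le_tropCompound_of_injective (h : I.card = J.card)
    (f : {x // x ∈ I} → {x // x ∈ J}) (hf : Injective f) :
    ∑ i, A i.1 (f i).1 ≤ tropCompound A I J h :=
  le_tropCompound A h (Equiv.ofBijective f <| (Fintype.bijective_iff_injective_and_card f).2
    ⟨hf, by simpa using h⟩)

theorem sum_le_tropCompound_of_injOn (h : I.card = J.card) (g : Fin n → Fin n)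
    (hmaps : ∀ x ∈ I, g x ∈ J) (hinj : Set.InjOn g I) :
    ∑ x ∈ I, A x (g x) ≤ tropCompound A I J h := by
  rw [← sum_coe_sort]
  exact sum_le_tropCompound_of_injective A h (fun x => ⟨g x, hmaps x x.2⟩)
    fun x y hxy => Subtype.ext <| hinj x.2 y.2 (congrArg Subtype.val hxy)

end TropCompound

theorem Equiv.Perm.exists_extend_compl {α : Type*} [Fintype α] [DecidableEq α] {I J : Finset α}
    (h : J.card = I.card) (σ : {x // x ∈ Iᶜ} ≃ {x // x ∈ Jᶜ}) :
    ∃ π : Equiv.Perm α, (∀ x : {x // x ∈ Iᶜ}, π x = σ x) ∧ ∀ x ∈ I, π x ∈ J := by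
  have hcard : Fintype.card {x // x ∉ Iᶜ} = Fintype.card {x // x ∉ Jᶜ} := by
    simp [h]
  set τ := Fintype.equivOfCardEq hcard
  refine ⟨σ.subtypeCongr τ, fun x => ?_, fun x hx => ?_⟩
  · simp [Equiv.subtypeCongr, Equiv.sumCompl_symm_apply_of_pos x.2]
  · simpa [Equiv.subtypeCongr, hx] using (τ ⟨x, by simpa⟩).2

section Paths

open Matrix

variable {n : ℕ} {A : Matrix (Fin n) (Fin n) ℝ} {π : Equiv.Perm (Fin n)} {I J : Finset (Fin n)}

theorem exists_sum_hitFiber_le_tropAdj (hdiag : ∀ i, A i i = 0) (hIJ : ∀ x ∈ I, π x ∈ J)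
    {i : Fin n} (hi : i ∈ I) :
    ∃ j ∈ J, j ∈ insert i (hitFiber π I i) ∧ ∑ x ∈ hitFiber π I i, A x (π x) ≤ tropAdj A j i := by
  set F := hitFiber π I i
  set g : Fin n → Fin n := fun x => if x ∈ F then π x else x
  have hFI : ∀ x ∈ F, x ∉ I := fun x hx => mem_compl.1 (mem_filter.1 hx).1
  -- `j` is the start of the path into `i`: by counting, some point is missed by `g` on `{i}ᶜ`.
  obtain ⟨j, -, hj⟩ : ∃ j ∈ univ, j ∉ ({i}ᶜ : Finset (Fin n)).image g :=
    exists_mem_notMem_of_card_lt_card <| card_image_le.trans_lt <| by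
      simpa using (card_compl_lt_iff_nonempty {i}).2 (singleton_nonempty i)
  have hgj : ∀ x, x ≠ i → g x ≠ j := fun x hx hgx => hj (mem_image.2 ⟨x, by simpa using hx, hgx⟩)
  have hjF : j ∈ insert i F := by
    by_contra hjF
    rw [mem_insert, not_or] at hjF
    exact hgj j hjF.1 (if_neg hjF.2)
  have hjJ : j ∈ J := by
    by_cases hy : π.symm j ∈ I
    · simpa using hIJ _ hy
    · have hyF : π.symm j ∈ F := (mem_hitFiber_iff_apply_mem_insert hi hy).2 (by simpa using hjF)
      exact absurd (by simp [g, hyF]) (hgj (π.symm j) fun h => hy (h ▸ hi))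
  refine ⟨j, hjJ, hjF, ?_⟩
  have hFi : F ⊆ {i}ᶜ := fun x hx => mem_compl.2 fun h => hFI x hx (mem_singleton.1 h ▸ hi)
  rw [← sum_ite_mem_of_diag_eq_zero hdiag π hFi]
  refine sum_le_tropCompound_of_injOn A (by simp [card_compl]) g (fun x hx => ?_)
    (injOn_ite_mem π.injective ?_)
  · simpa using hgj x (by simpa using hx)
  · intro x hx y hy hyF hxy
    rcases mem_insert.1 ((mem_hitFiber_iff_apply_mem_insert hi (hFI x hx)).1 hx) with h | h
    · exact (by simpa using hy : y ≠ i) (hxy ▸ h)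
    · exact hyF (hxy ▸ h)

theorem sum_compl_le_tropCompound_tropAdjM (hdiag : ∀ i, A i i = 0)
    (hopt : ∀ π : Equiv.Perm (Fin n), ∑ i, A i (π i) ≤ 0) (hIJ : ∀ x ∈ I, π x ∈ J)
    (h : J.card = I.card) :
    ∑ x ∈ Iᶜ, A x (π x) ≤ tropCompound (tropAdjM A) J I h := by
  set C := {x ∈ Iᶜ | firstHit π I x = none}
  have hsplit : ∑ x ∈ Iᶜ, A x (π x) =
      ∑ x ∈ C, A x (π x) + ∑ i ∈ I, ∑ x ∈ hitFiber π I i, A x (π x) := by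
    rw [← sum_fiberwise_of_maps_to (g := firstHit π I) (t := I.insertNone), sum_insertNone]
    · rfl
    · intro x _
      cases hx : firstHit π I x with
      | none => simp
      | some y => simpa using mem_of_firstHit_eq_some hx
  have hC : ∑ x ∈ C, A x (π x) ≤ 0 := by
    refine sum_le_zero_of_mapsTo hdiag hopt π fun x hx => ?_
    obtain ⟨hxI, hx⟩ := mem_filter.1 hx
    have hπx : firstHit π I (π x) = none := (firstHit_apply_of_notMem (mem_compl.1 hxI)).trans hx
    refine mem_filter.2 ⟨mem_compl.2 fun hI => ?_, hπx⟩
    simp [firstHit_of_mem (s := (I : Set (Fin n))) hI] at hπx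
  choose j hjJ hjF hj using fun i : {x // x ∈ I} => exists_sum_hitFiber_le_tropAdj hdiag hIJ i.2
  have hinj : Injective fun i => (⟨j i, hjJ i⟩ : {x // x ∈ J}) := by
    intro a b hab
    have ha := (mem_insert_hitFiber_iff a.2).1 (hjF a)
    have hb := (mem_insert_hitFiber_iff b.2).1 (hjF b)
    rw [show j a = j b from congrArg Subtype.val hab, hb] at ha
    exact Subtype.ext (Option.some_injective _ ha).symm
  calc ∑ x ∈ Iᶜ, A x (π x) ≤ ∑ i ∈ I, ∑ x ∈ hitFiber π I i, A x (π x) := by linarith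
    _ = ∑ i : {x // x ∈ I}, ∑ x ∈ hitFiber π I i, A x (π x) := (sum_coe_sort I _).symm
    _ ≤ ∑ i : {x // x ∈ I}, (tropAdjM A)ᵀ i (j i) := sum_le_sum fun i _ => hj i
    _ ≤ tropCompound (tropAdjM A)ᵀ I J h.symm :=
        sum_le_tropCompound_of_injective _ h.symm _ hinj
    _ ≤ tropCompound (tropAdjM A) J I h :=
        tropCompound_le_tropCompound_transpose (tropAdjM A)ᵀ h.symm

end Paths

/-- For a normalized matrix, the optimal bijection value on the complements is a
lower bound for the optimal compound-adjoint value: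
`adj(A)^{∧k}_{J,I} ≥ A^{∧(n−k)}_{Iᶜ,Jᶜ}`. -/
theorem tropAdj_compound_ge_of_normalized {n : ℕ} (A : Matrix (Fin n) (Fin n) ℝ)
    (hdiag : ∀ i, A i i = 0)
    (hopt : ∀ π : Equiv.Perm (Fin n), ∑ i, A i (π i) ≤ 0)
    (I J : Finset (Fin n)) (h : J.card = I.card) :
    tropCompound A Iᶜ Jᶜ (by simp [Finset.card_compl, h]) ≤
      tropCompound (tropAdjM A) J I h := by
  refine tropCompound_le A _ fun σ => ?_
  obtain ⟨π, hπσ, hIJ⟩ := Equiv.Perm.exists_extend_compl h σ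
  calc ∑ x, A x.1 (σ x).1 = ∑ x ∈ Iᶜ, A x (π x) := by
        rw [← sum_coe_sort Iᶜ fun x => A x (π x)]
        simp only [hπσ]
    _ ≤ tropCompound (tropAdjM A) J I h := sum_compl_le_tropCompound_tropAdjM hdiag hopt hIJ h
end

section
/- Let A ∈ ℝ^{n×n} be normalized (zero diagonal, identity optimal, per(A)=0) and I, J ⊆ [n] with |I|=|J|=k. Suppose Π : Iᶜ → Jᶜ is any bijection. Then there exist permutations τ₁,…,τ_k ∈ S_n and a bijection π : I → J such that Σ_{t=1}^k Σ_{i ≠ i_t} A_{i,τ_t(i)} ≥ Σ_{i∈Iᶜ} A_{i,Π(i)}, where (i_t, π(i_t)) enumerates the graph of π and τ_t(i_t) = π(i_t). (Every optimal complement-bijection value is achievable as a base value of k assignments with supervisions I on J.) -/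
/-!
Extend `P` to a permutation `σ` each of whose cycles contains at most one point of `I`: prescribe
`σ a = P a` for the points `a` of `Iᶜ` one at a time, each time composing with the transposition
`(a b)`, where `b` is the point currently sent to `P a`; this merges the cycles of `a` and `b`.
Take `π = σ` on `I` and `τ_t` the cycle of `σ` through `i_t`. As `A` has zero diagonal, the `t`-th
base term is the sum of `A i (σ i)` over the cycle of `i_t` with `i_t` removed; these cycles are
disjoint, so the base value is the part of `∑_{i ∉ I} A i (σ i)` carried by cycles meeting `I`.
The remaining cycles avoid `I` and form a permutation of their own, of value `≤ 0` because the
identity is optimal.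
-/

open Equiv Equiv.Perm Finset

namespace Equiv.Perm

variable {α : Type*}

theorem SameCycle.of_mul_swap [Finite α] [DecidableEq α] {σ : Perm α} {a b x y : α}
    (h : (σ * swap a b).SameCycle x y) :
    σ.SameCycle x y ∨
      ((σ.SameCycle x a ∨ σ.SameCycle x b) ∧ (σ.SameCycle y a ∨ σ.SameCycle y b)) := by
  obtain ⟨m, rfl⟩ := h.exists_nat_pow_eq
  clear h
  induction m with
  | zero => exact Or.inl SameCycle.rfl
  | succ m ih =>
    rw [pow_succ', mul_apply, mul_apply, sameCycle_apply_right, sameCycle_apply_left,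
      sameCycle_apply_left]
    generalize ((σ * swap a b) ^ m) x = z at ih ⊢
    by_cases hza : z = a
    · subst hza
      rw [swap_apply_left]
      rcases ih with h | ⟨hx, -⟩
      · exact Or.inr ⟨Or.inl h, Or.inr SameCycle.rfl⟩
      · exact Or.inr ⟨hx, Or.inr SameCycle.rfl⟩
    by_cases hzb : z = b
    · subst hzb
      rw [swap_apply_right]
      rcases ih with h | ⟨hx, -⟩
      · exact Or.inr ⟨Or.inr h, Or.inl SameCycle.rfl⟩
      · exact Or.inr ⟨hx, Or.inl SameCycle.rfl⟩
    rwa [swap_apply_of_ne_of_ne hza hzb]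

theorem exists_eqOn_pairwise_not_sameCycle [Finite α] [DecidableEq α] (σ₀ : Perm α)
    (s : Finset α) :
    ∃ σ : Perm α, Set.EqOn σ σ₀ s ∧ (s : Set α)ᶜ.Pairwise fun f f' => ¬σ.SameCycle f f' := by
  induction s using Finset.induction_on with
  | empty => exact ⟨1, by simp, fun f _ f' _ hne h => hne (sameCycle_one.1 h)⟩
  | insert a s ha ih =>
    obtain ⟨σ, hσ, hsep⟩ := ih
    set b := σ.symm (σ₀ a)
    have hσb : σ b = σ₀ a := σ.apply_symm_apply _
    have hb : b ∉ s := fun hb => ha (σ₀.injective ((hσ hb).symm.trans hσb) ▸ hb)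
    refine ⟨σ * swap a b, ?_, ?_⟩
    · intro x hx
      obtain rfl | hx := mem_insert.1 hx
      · rw [mul_apply, swap_apply_left, hσb]
      · rw [mul_apply, swap_apply_of_ne_of_ne (ne_of_mem_of_not_mem hx ha)
          (ne_of_mem_of_not_mem hx hb), hσ hx]
    · have hmeets_b : ∀ g ∉ insert a s, σ.SameCycle g a ∨ σ.SameCycle g b → σ.SameCycle g b := by
        intro g hg hga
        rw [mem_insert, not_or] at hg
        exact hga.resolve_left (hsep hg.2 ha hg.1)
      intro f hf f' hf' hne h
      have hfs : f ∉ s := fun h => hf (mem_insert_of_mem h)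
      have hf's : f' ∉ s := fun h => hf' (mem_insert_of_mem h)
      rcases h.of_mul_swap with h | ⟨hfab, hf'ab⟩
      · exact hsep hfs hf's hne h
      · exact hsep hfs hf's hne ((hmeets_b f hf hfab).trans (hmeets_b f' hf' hf'ab).symm)

section Sum

variable [Fintype α] {M : Type*}

theorem sum_apply_ofSubtype_subtypePerm [AddCommMonoid M] {A : α → α → M}
    (hdiag : ∀ i, A i i = 0) (σ : Perm α) {p : α → Prop} [DecidablePred p]
    (hp : ∀ x, p (σ x) ↔ p x) :
    ∑ i, A i (ofSubtype (σ.subtypePerm hp) i) = ∑ i with p i, A i (σ i) := by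
  rw [sum_filter]
  refine sum_congr rfl fun i _ => ?_
  split_ifs with hi
  · rw [ofSubtype_subtypePerm_of_mem hp hi]
  · rw [ofSubtype_subtypePerm_of_not_mem hp hi, hdiag]

theorem sum_apply_cycleOf [DecidableEq α] [AddCommMonoid M] {A : α → α → M}
    (hdiag : ∀ i, A i i = 0) (σ : Perm α) (f : α) :
    ∑ i, A i (σ.cycleOf f i) = ∑ i with σ.SameCycle f i, A i (σ i) :=
  sum_apply_ofSubtype_subtypePerm hdiag σ fun _ => sameCycle_apply_right

theorem sum_compl_le_sum_sum_cycleOf [DecidableEq α] [AddCommGroup M] [PartialOrder M]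
    [IsOrderedAddMonoid M]
    {A : α → α → M} (hdiag : ∀ i, A i i = 0) (hopt : ∀ ρ : Perm α, ∑ i, A i (ρ i) ≤ 0)
    (σ : Perm α) (S : Finset α) (hS : (S : Set α).Pairwise fun f f' => ¬σ.SameCycle f f') :
    ∑ i ∈ Sᶜ, A i (σ i) ≤ ∑ f ∈ S, ∑ i ∈ {f}ᶜ, A i (σ.cycleOf f i) := by
  classical
  set T : α → Prop := fun i => ∃ f ∈ S, σ.SameCycle f i
  have hT : ∀ x, T (σ x) ↔ T x := fun x => by simp only [T, sameCycle_apply_right]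
  have hcycle : ∀ f, ∑ i ∈ {f}ᶜ, A i (σ.cycleOf f i) =
      ∑ i with σ.SameCycle f i, A i (σ i) - A f (σ f) := fun f => by
    rw [← sum_apply_cycleOf hdiag, ← sum_compl_add_sum {f}, sum_singleton, cycleOf_apply_self,
      add_sub_cancel_right]
  have hcover : ∑ f ∈ S, ∑ i with σ.SameCycle f i, A i (σ i) = ∑ i with T i, A i (σ i) := by
    rw [← sum_biUnion]
    · congr 1
      ext i
      simp [T]
    · intro f hf f' hf' hne
      simp only [Function.onFun, disjoint_left, mem_filter, mem_univ, true_and]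
      exact fun i hfi hf'i => hS hf hf' hne (hfi.trans hf'i.symm)
  have hrest : ∑ i with ¬T i, A i (σ i) ≤ 0 := by
    have hT' : ∀ x, ¬T (σ x) ↔ ¬T x := fun x => not_congr (hT x)
    rw [← sum_apply_ofSubtype_subtypePerm hdiag σ hT']
    exact hopt _
  calc ∑ i ∈ Sᶜ, A i (σ i)
      = ∑ i with T i, A i (σ i) + ∑ i with ¬T i, A i (σ i) - ∑ f ∈ S, A f (σ f) := by
        rw [sum_filter_add_sum_filter_not, ← sum_compl_add_sum S, add_sub_cancel_right]
    _ ≤ ∑ i with T i, A i (σ i) - ∑ f ∈ S, A f (σ f) := by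
        gcongr
        exact add_le_of_nonpos_right hrest
    _ = ∑ f ∈ S, ∑ i ∈ {f}ᶜ, A i (σ.cycleOf f i) := by
        rw [sum_congr rfl fun f _ => hcycle f, sum_sub_distrib, hcover]

end Sum

theorem mem_iff_apply_mem_of_eqOn {σ σ₀ : Perm α} {s t : Set α} (h : Set.EqOn σ σ₀ s)
    (h₀ : ∀ x, x ∈ s ↔ σ₀ x ∈ t) (x : α) : x ∈ s ↔ σ x ∈ t := by
  refine ⟨fun hx => h hx ▸ (h₀ x).1 hx, fun hx => ?_⟩
  have hy : σ₀.symm (σ x) ∈ s := (h₀ _).2 (by rwa [σ₀.apply_symm_apply])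
  have hxy : σ (σ₀.symm (σ x)) = σ x := (h hy).trans (σ₀.apply_symm_apply _)
  rwa [σ.injective hxy] at hy

end Equiv.Perm

theorem base_value_achieves_complement_bijection_general {n : ℕ} (A : Matrix (Fin n) (Fin n) ℝ)
    (hdiag : ∀ i, A i i = 0)
    (hopt : ∀ π : Equiv.Perm (Fin n), ∑ i, A i (π i) ≤ 0)
    (I J : Finset (Fin n)) (k : ℕ) (hI : I.card = k)
    (P : {x // x ∈ Iᶜ} ≃ {x // x ∈ Jᶜ}) :
    ∃ (τ : Fin k → Equiv.Perm (Fin n)) (π : {x // x ∈ I} ≃ {x // x ∈ J})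
      (e : Fin k ≃ {x // x ∈ I}),
      (∀ t : Fin k, τ t (e t : Fin n) = (π (e t) : Fin n)) ∧
      (∑ i : {x // x ∈ Iᶜ}, A i.1 (P i).1) ≤
        ∑ t : Fin k, ∑ i ∈ ({(e t : Fin n)}ᶜ : Finset (Fin n)), A i (τ t i) := by
  obtain ⟨σ, hσP, hsep⟩ := exists_eqOn_pairwise_not_sameCycle P.extendSubtype Iᶜ
  have hP : ∀ x, x ∈ Iᶜ ↔ P.extendSubtype x ∈ Jᶜ := fun x =>
    ⟨P.extendSubtype_mem x, not_imp_not.1 (P.extendSubtype_not_mem x)⟩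
  have hσ : ∀ x, x ∈ I ↔ σ x ∈ J := fun x => by
    simpa using (mem_iff_apply_mem_of_eqOn (t := ↑Jᶜ) hσP hP x).not
  let e : Fin k ≃ {x // x ∈ I} := (I.equivFinOfCardEq hI).symm
  refine ⟨fun t => σ.cycleOf (e t), σ.subtypeEquiv hσ, e, fun t => σ.cycleOf_apply_self _, ?_⟩
  calc ∑ i : {x // x ∈ Iᶜ}, A i.1 (P i).1
      = ∑ i ∈ Iᶜ, A i (σ i) := by
        rw [← sum_coe_sort Iᶜ]
        refine sum_congr rfl fun i _ => ?_
        rw [hσP i.2, P.extendSubtype_apply_of_mem _ i.2]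
    _ ≤ ∑ f ∈ I, ∑ i ∈ {f}ᶜ, A i (σ.cycleOf f i) :=
        sum_compl_le_sum_sum_cycleOf hdiag hopt σ I (by simpa using hsep)
    _ = ∑ t, ∑ i ∈ {(e t : Fin n)}ᶜ, A i (σ.cycleOf (e t) i) := by
        rw [← sum_coe_sort I, ← e.sum_comp]

/-- For a normalized matrix, every complement-bijection value is achievable as a
base value of `k` assignments with supervisions `I` on `J`. -/
theorem base_value_achieves_complement_bijection {n : ℕ} (A : Matrix (Fin n) (Fin n) ℝ)
    (hdiag : ∀ i, A i i = 0)
    (hopt : ∀ π : Equiv.Perm (Fin n), ∑ i, A i (π i) ≤ 0)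
    (I J : Finset (Fin n)) (k : ℕ) (hI : I.card = k) (hJ : J.card = k)
    (P : {x // x ∈ Iᶜ} ≃ {x // x ∈ Jᶜ}) :
    ∃ (τ : Fin k → Equiv.Perm (Fin n)) (π : {x // x ∈ I} ≃ {x // x ∈ J})
      (e : Fin k ≃ {x // x ∈ I}),
      (∀ t : Fin k, τ t (e t : Fin n) = (π (e t) : Fin n)) ∧
      (∑ i : {x // x ∈ Iᶜ}, A i.1 (P i).1) ≤
        ∑ t : Fin k, ∑ i ∈ ({(e t : Fin n)}ᶜ : Finset (Fin n)), A i (τ t i) :=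
  base_value_achieves_complement_bijection_general A hdiag hopt I J k hI P
end
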